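/- arXiv:2307.05117 — 5 statements merged into one kernel-verified Lean document; each statement's English description precedes it below -/
import Mathlib

section
/- Let n ≥ 1, a, b ∈ {−1,1}^n, and let c > 0 and ε ∈ (0,1) be reals such that Δ(a,b) ≥ c·√n and n ≤ c²/(2ε²). Then the unique minimizer x* = Δ(a,b)/n of x ↦ ‖x·a − b‖_2^2 satisfies x* > 0, and for every x ≤ 0 one has ‖x·a − b‖_2^2 ≥ (1 + 2ε²)·min_{y ∈ ℝ} ‖y·a − b‖_2^2. -/
/-! For sign vectors the objective is the quadratic `n x² - 2Δx + n`, whose minimum is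
`n - Δ²/n`, attained at `x* = Δ/n`. At any `x ≤ 0` the cross term `-2Δx` is nonnegative, so the
objective is at least `n`; and `Δ² ≥ c²n ≥ 2ε²n²` pushes the minimum down to at most
`(1 - 2ε²) n`, which is at most `n / (1 + 2ε²)`. -/

open Finset

theorem iInf_quadratic {A : ℝ} (hA : 0 < A) (B C : ℝ) :
    ⨅ y : ℝ, A * y ^ 2 - 2 * B * y + C = C - B ^ 2 / A := by
  refine IsGLB.ciInf_eq (IsLeast.isGLB ⟨⟨B / A, by field_simp; ring⟩, ?_⟩)
  rintro _ ⟨y, rfl⟩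
  have h : A * y ^ 2 - 2 * B * y + C - (C - B ^ 2 / A) = (A * y - B) ^ 2 / A := by
    field_simp; ring
  have : 0 ≤ (A * y - B) ^ 2 / A := by positivity
  linarith

section LeastSquares

variable {ι : Type*} [Fintype ι]

theorem sum_sq_mul_sub_eq (a b : ι → ℝ) (x : ℝ) :
    ∑ i, (x * a i - b i) ^ 2
      = (∑ i, a i ^ 2) * x ^ 2 - 2 * (∑ i, a i * b i) * x + ∑ i, b i ^ 2 := by
  simp only [sum_mul, mul_sum, ← sum_sub_distrib, ← sum_add_distrib]
  exact sum_congr rfl fun i _ => by ring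

theorem iInf_sum_sq_mul_sub {a : ι → ℝ} (ha : 0 < ∑ i, a i ^ 2) (b : ι → ℝ) :
    ⨅ y : ℝ, ∑ i, (y * a i - b i) ^ 2
      = ∑ i, b i ^ 2 - (∑ i, a i * b i) ^ 2 / ∑ i, a i ^ 2 := by
  simp only [sum_sq_mul_sub_eq]
  exact iInf_quadratic ha _ _

theorem sum_sq_le_sum_sq_mul_sub {a b : ι → ℝ} (hab : 0 ≤ ∑ i, a i * b i) {x : ℝ}
    (hx : x ≤ 0) : ∑ i, b i ^ 2 ≤ ∑ i, (x * a i - b i) ^ 2 := by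
  rw [sum_sq_mul_sub_eq]
  have : 0 ≤ (∑ i, a i ^ 2) * x ^ 2 := by positivity
  nlinarith

theorem sum_sq_eq_card_of_sign {a : ι → ℝ} (ha : ∀ i, a i = 1 ∨ a i = -1) :
    ∑ i, a i ^ 2 = Fintype.card ι := by
  rw [Fintype.card_eq_sum_ones, Nat.cast_sum, Nat.cast_one]
  exact sum_congr rfl fun i _ => by rcases ha i with h | h <;> simp [h]

end LeastSquares

theorem stmt_2_general (n : ℕ) (hn : 1 ≤ n) (a b : Fin n → ℝ)
    (ha : ∀ i, a i = 1 ∨ a i = -1) (hb : ∀ i, b i = 1 ∨ b i = -1)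
    (c ε : ℝ) (hc : 0 < c)
    (hΔ : (∑ i, a i * b i) ≥ c * Real.sqrt n)
    (hn2 : (n : ℝ) ≤ c ^ 2 / (2 * ε ^ 2)) :
    0 < (∑ i, a i * b i) / n ∧
    ∀ x : ℝ, x ≤ 0 →
      ∑ i, (x * a i - b i) ^ 2 ≥
        (1 + 2 * ε ^ 2) * ⨅ y : ℝ, ∑ i, (y * a i - b i) ^ 2 := by
  set Δ := ∑ i, a i * b i
  have hn0 : (0 : ℝ) < n := by exact_mod_cast hn
  have hna : ∑ i, a i ^ 2 = n := by rw [sum_sq_eq_card_of_sign ha, Fintype.card_fin]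
  have hnb : ∑ i, b i ^ 2 = n := by rw [sum_sq_eq_card_of_sign hb, Fintype.card_fin]
  have hcn : 0 < c * Real.sqrt n := by positivity
  have hΔ0 : 0 < Δ := hcn.trans_le hΔ
  have hcΔ : c ^ 2 * n ≤ Δ ^ 2 := by
    rw [← Real.sq_sqrt hn0.le, ← mul_pow]
    exact pow_le_pow_left₀ hcn.le hΔ 2
  have hεc : n * (2 * ε ^ 2) ≤ c ^ 2 := mul_le_of_le_div₀ (sq_nonneg c) (by positivity) hn2
  have hgap : 2 * ε ^ 2 * n ≤ Δ ^ 2 / n := by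
    rw [le_div_iff₀ hn0]; nlinarith
  refine ⟨div_pos hΔ0 hn0, fun x hx => ?_⟩
  have hfx := hnb ▸ sum_sq_le_sum_sq_mul_sub hΔ0.le hx
  rw [iInf_sum_sq_mul_sub (hna ▸ hn0) b, hna, hnb]
  nlinarith [sq_nonneg ε, mul_nonneg (sq_nonneg ε) (sq_nonneg ε)]

theorem stmt_2 (n : ℕ) (hn : 1 ≤ n) (a b : Fin n → ℝ)
    (ha : ∀ i, a i = 1 ∨ a i = -1) (hb : ∀ i, b i = 1 ∨ b i = -1)
    (c ε : ℝ) (hc : 0 < c) (hε0 : 0 < ε) (hε1 : ε < 1)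
    (hΔ : (∑ i, a i * b i) ≥ c * Real.sqrt n)
    (hn2 : (n : ℝ) ≤ c ^ 2 / (2 * ε ^ 2)) :
    0 < (∑ i, a i * b i) / n ∧
    ∀ x : ℝ, x ≤ 0 →
      ∑ i, (x * a i - b i) ^ 2 ≥
        (1 + 2 * ε ^ 2) * ⨅ y : ℝ, ∑ i, (y * a i - b i) ^ 2 :=
  stmt_2_general n hn a b ha hb c ε hc hΔ hn2
end

section
/- Let n ≥ 1, a, b ∈ {−1,1}^n, set r = #{i ∈ [n] : a_i = b_i}, and let c > 0 and ε ∈ (0,1) be reals with r ≥ n/2 + (c/2)·√n and n ≤ c²/ε². Then min_{y ∈ ℝ} ‖y·a − b‖_1 ≤ n − c·√n, and for every x ≤ 0 one has ‖x·a − b‖_1 ≥ n; consequently ‖x·a − b‖_1 ≥ (1 + ε)·min_{y ∈ ℝ} ‖y·a − b‖_1 for every x ≤ 0. -/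
/-! For sign vectors, the coordinate `i` contributes `|x - 1|` when `a i = b i` and `|x + 1|`
otherwise, so the objective is `r |x - 1| + (n - r) |x + 1|`. At `x = 1` this is
`2 (n - r) ≤ n - c √n`, while for `x ≤ 0` and `r ≥ n / 2` it is at least `n`. The hypothesis
`n ≤ c² / ε²` says `ε √n ≤ c`, which is exactly what makes `(1 + ε) (n - c √n) ≤ n`. -/

open Finset

lemma abs_mul_sub_of_sign {a b : ℝ} (ha : a = 1 ∨ a = -1) (hb : b = 1 ∨ b = -1) (x : ℝ) :
    |x * a - b| = if a = b then |x - 1| else |x + 1| := by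
  rcases ha with rfl | rfl <;> rcases hb with rfl | rfl <;>
    norm_num <;> rw [← abs_neg] <;> ring_nf

section SignVectors

variable {ι : Type*} [Fintype ι] {a b : ι → ℝ}

lemma sum_abs_mul_sub_of_sign (ha : ∀ i, a i = 1 ∨ a i = -1) (hb : ∀ i, b i = 1 ∨ b i = -1)
    (x : ℝ) :
    ∑ i, |x * a i - b i| =
      #{i | a i = b i} * |x - 1| + (Fintype.card ι - #{i | a i = b i}) * |x + 1| := by
  classical
  have hcard : (#{i | ¬a i = b i} : ℝ) = Fintype.card ι - #{i | a i = b i} := by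
    rw [eq_sub_iff_add_eq', ← Nat.cast_add, card_filter_add_card_filter_not, card_univ]
  simp only [abs_mul_sub_of_sign (ha _) (hb _), sum_ite, sum_const, nsmul_eq_mul, hcard]

lemma iInf_sum_abs_mul_sub_le (ha : ∀ i, a i = 1 ∨ a i = -1) (hb : ∀ i, b i = 1 ∨ b i = -1) :
    ⨅ y : ℝ, ∑ i, |y * a i - b i| ≤ 2 * (Fintype.card ι - #{i | a i = b i}) := by
  have hbdd : BddBelow (Set.range fun y : ℝ => ∑ i, |y * a i - b i|) :=
    ⟨0, by rintro _ ⟨y, rfl⟩; positivity⟩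
  refine (ciInf_le hbdd 1).trans_eq ?_
  rw [sum_abs_mul_sub_of_sign ha hb]
  norm_num
  ring

lemma card_le_sum_abs_mul_sub_of_nonpos (ha : ∀ i, a i = 1 ∨ a i = -1)
    (hb : ∀ i, b i = 1 ∨ b i = -1) (hr : (Fintype.card ι : ℝ) ≤ 2 * #{i | a i = b i})
    {x : ℝ} (hx : x ≤ 0) :
    (Fintype.card ι : ℝ) ≤ ∑ i, |x * a i - b i| := by
  rw [sum_abs_mul_sub_of_sign ha hb]
  have hrn : (#{i | a i = b i} : ℝ) ≤ Fintype.card ι := by exact_mod_cast card_le_univ _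
  have hx1 : |x - 1| = 1 - x := by rw [abs_of_nonpos (by linarith)]; ring
  nlinarith [le_abs_self (x + 1)]

end SignVectors

lemma one_add_mul_sub_mul_sqrt_le {t c ε : ℝ} (ht : 0 ≤ t) (hc : 0 < c) (hε : 0 < ε)
    (htc : t ≤ c ^ 2 / ε ^ 2) :
    (1 + ε) * (t - c * √t) ≤ t := by
  have hεt : ε * √t ≤ c := le_of_pow_le_pow_left₀ two_ne_zero hc.le <| by
    rwa [mul_pow, Real.sq_sqrt ht, ← le_div_iff₀' (by positivity)]
  have hεt' : ε * t ≤ c * √t := by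
    simpa only [mul_assoc, Real.mul_self_sqrt ht] using
      mul_le_mul_of_nonneg_right hεt (Real.sqrt_nonneg t)
  nlinarith [mul_nonneg hε.le (mul_nonneg hc.le (Real.sqrt_nonneg t))]

theorem stmt_4_general (n : ℕ) (a b : Fin n → ℝ)
    (ha : ∀ i, a i = 1 ∨ a i = -1) (hb : ∀ i, b i = 1 ∨ b i = -1)
    (c ε : ℝ) (hc : 0 < c) (hε0 : 0 < ε)
    (hr : ((univ.filter (fun i => a i = b i)).card : ℝ) ≥ n / 2 + c / 2 * Real.sqrt n)
    (hn2 : (n : ℝ) ≤ c ^ 2 / ε ^ 2) :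
    (⨅ y : ℝ, ∑ i, |y * a i - b i|) ≤ (n : ℝ) - c * Real.sqrt n ∧
    (∀ x : ℝ, x ≤ 0 → ∑ i, |x * a i - b i| ≥ (n : ℝ)) ∧
    (∀ x : ℝ, x ≤ 0 →
      ∑ i, |x * a i - b i| ≥ (1 + ε) * ⨅ y : ℝ, ∑ i, |y * a i - b i|) := by
  have hcard : Fintype.card (Fin n) = n := Fintype.card_fin n
  have hc_sqrt : 0 ≤ c * √n := by positivity
  have hmin : (⨅ y : ℝ, ∑ i, |y * a i - b i|) ≤ n - c * √n := by
    have := iInf_sum_abs_mul_sub_le ha hb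
    rw [hcard] at this
    linarith
  have hneg : ∀ x : ℝ, x ≤ 0 → ∑ i, |x * a i - b i| ≥ n := fun x hx => by
    simpa only [hcard] using card_le_sum_abs_mul_sub_of_nonpos ha hb (by rw [hcard]; linarith) hx
  refine ⟨hmin, hneg, fun x hx => ?_⟩
  calc (1 + ε) * ⨅ y : ℝ, ∑ i, |y * a i - b i|
      ≤ (1 + ε) * (n - c * √n) := by gcongr
    _ ≤ n := one_add_mul_sub_mul_sqrt_le n.cast_nonneg hc hε0 hn2
    _ ≤ ∑ i, |x * a i - b i| := hneg x hx

theorem stmt_4 (n : ℕ) (hn : 1 ≤ n) (a b : Fin n → ℝ)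
    (ha : ∀ i, a i = 1 ∨ a i = -1) (hb : ∀ i, b i = 1 ∨ b i = -1)
    (c ε : ℝ) (hc : 0 < c) (hε0 : 0 < ε) (hε1 : ε < 1)
    (hr : ((univ.filter (fun i => a i = b i)).card : ℝ) ≥ n / 2 + c / 2 * Real.sqrt n)
    (hn2 : (n : ℝ) ≤ c ^ 2 / ε ^ 2) :
    (⨅ y : ℝ, ∑ i, |y * a i - b i|) ≤ (n : ℝ) - c * Real.sqrt n ∧
    (∀ x : ℝ, x ≤ 0 → ∑ i, |x * a i - b i| ≥ (n : ℝ)) ∧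
    (∀ x : ℝ, x ≤ 0 →
      ∑ i, |x * a i - b i| ≥ (1 + ε) * ⨅ y : ℝ, ∑ i, |y * a i - b i|) :=
  stmt_4_general n a b ha hb c ε hc hε0 hr hn2
end

section
/- Let 1 ≤ r ≤ 2, let (Ω, μ) be a probability space, and let X₁, …, X_n : Ω → ℝ be independent random variables with E[X_i] = 0 and E[|X_i|^r] < ∞ for each i. Then E[|X₁ + ⋯ + X_n|^r] ≤ 2·Σ_{i=1}^n E[|X_i|^r]. -/
open MeasureTheory ProbabilityTheory Finset

/-!
With `ψ(x) = sign x * |x| ^ (r - 1)`, so that `r * ψ` is the derivative of `|x| ^ r`, one has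
the pointwise bound `|x + y| ^ r ≤ |x| ^ r + r * ψ x * y + 2 * |y| ^ r`: for `r > 1` it is the
first-order Taylor expansion of `|·| ^ r`, whose remainder `∫₀ʸ r (ψ(x + t) - ψ x) dt` is at
most `2 |y| ^ r` because `ψ` is `(r - 1)`-Hölder with constant `2`; for `r = 1`, `ψ = sign`
and it is the triangle inequality. Apply it to `x = S` (a partial sum) and `y = Y` (the next
summand): since `ψ S` is independent of `Y` and `E Y = 0`, the middle term has expectation
zero, so `E|S + Y| ^ r ≤ E|S| ^ r + 2 E|Y| ^ r`, and induction on the number of summands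
concludes.
-/

noncomputable def signedRpow (s t : ℝ) : ℝ := SignType.sign t * |t| ^ s

section signedRpow

variable {s : ℝ}

@[simp]
lemma signedRpow_zero (s : ℝ) : signedRpow s 0 = 0 := by
  simp [signedRpow]

lemma signedRpow_neg (s t : ℝ) : signedRpow s (-t) = -signedRpow s t := by
  simp [signedRpow, Left.sign_neg]

lemma signedRpow_of_pos {t : ℝ} (ht : 0 < t) : signedRpow s t = t ^ s := by
  simp [signedRpow, sign_pos ht, abs_of_pos ht]

lemma abs_signedRpow_le (s t : ℝ) : |signedRpow s t| ≤ |t| ^ s := by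
  have hpow : 0 ≤ |t| ^ s := Real.rpow_nonneg (abs_nonneg t) s
  rcases lt_trichotomy t 0 with ht | rfl | ht
  · simp [signedRpow, sign_neg ht, abs_of_nonneg hpow]
  · simpa using hpow
  · simp [signedRpow, sign_pos ht, abs_of_nonneg hpow]

lemma monotone_signedRpow (hs : 0 ≤ s) : Monotone (signedRpow s) := by
  refine monotone_of_odd_of_monotoneOn_nonneg (signedRpow_neg s) fun a ha b hb hab => ?_
  rcases (Set.mem_Ici.1 ha).eq_or_lt with rfl | ha
  · rcases (Set.mem_Ici.1 hb).eq_or_lt with rfl | hb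
    · rfl
    · simpa [signedRpow_of_pos hb] using Real.rpow_nonneg hb.le s
  · rw [signedRpow_of_pos ha, signedRpow_of_pos (ha.trans_le hab)]
    exact Real.rpow_le_rpow ha.le hab hs

lemma signedRpow_sub_le_of_nonneg (hs0 : 0 ≤ s) (hs1 : s ≤ 1) {a b : ℝ} (hb : 0 ≤ b)
    (hab : b ≤ a) : signedRpow s a - signedRpow s b ≤ (a - b) ^ s := by
  rcases hb.eq_or_lt with rfl | hb
  · simpa [abs_of_nonneg hab] using (le_abs_self _).trans (abs_signedRpow_le s a)
  · rw [signedRpow_of_pos hb, signedRpow_of_pos (hb.trans_le hab), sub_le_iff_le_add]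
    simpa using Real.rpow_add_le_add_rpow (sub_nonneg.2 hab) hb.le hs0 hs1

lemma signedRpow_sub_le (hs0 : 0 ≤ s) (hs1 : s ≤ 1) {a b : ℝ} (hab : b ≤ a) :
    signedRpow s a - signedRpow s b ≤ 2 * (a - b) ^ s := by
  have hpow : 0 ≤ (a - b) ^ s := Real.rpow_nonneg (sub_nonneg.2 hab) s
  rcases le_or_gt 0 b with hb | hb
  · linarith [signedRpow_sub_le_of_nonneg hs0 hs1 hb hab]
  rcases le_or_gt a 0 with ha | ha
  · have := signedRpow_sub_le_of_nonneg hs0 hs1 (neg_nonneg.2 ha) (neg_le_neg hab)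
    rw [signedRpow_neg, signedRpow_neg, neg_sub_neg, neg_sub_neg] at this
    linarith
  · have ha' : |a| ^ s ≤ (a - b) ^ s :=
      Real.rpow_le_rpow (abs_nonneg a) (by rw [abs_of_pos ha]; linarith) hs0
    have hb' : |b| ^ s ≤ (a - b) ^ s :=
      Real.rpow_le_rpow (abs_nonneg b) (by rw [abs_of_neg hb]; linarith) hs0
    linarith [le_abs_self (signedRpow s a), neg_abs_le (signedRpow s b),
      abs_signedRpow_le s a, abs_signedRpow_le s b]

end signedRpow

lemma hasDerivAt_abs_rpow_eq_signedRpow {p : ℝ} (hp : 1 < p) (u : ℝ) :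
    HasDerivAt (fun t : ℝ => |t| ^ p) (p * signedRpow (p - 1) u) u := by
  convert hasDerivAt_abs_rpow u hp using 1
  rcases eq_or_ne u 0 with rfl | hu
  · simp
  · rw [signedRpow, show p - 1 = p - 2 + 1 by ring, Real.rpow_add_one (abs_ne_zero.2 hu)]
    linear_combination p * |u| ^ (p - 2) * sign_mul_abs u

lemma abs_add_rpow_le_of_nonneg {r : ℝ} (hr1 : 1 < r) (hr2 : r ≤ 2) (x : ℝ) {y : ℝ}
    (hy : 0 ≤ y) : |x + y| ^ r ≤ |x| ^ r + r * signedRpow (r - 1) x * y + 2 * y ^ r := by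
  have hmono : Monotone fun t => r * signedRpow (r - 1) (x + t) := fun a b hab =>
    mul_le_mul_of_nonneg_left (monotone_signedRpow (by linarith) (by gcongr))
      (by linarith)
  have hftc : ∫ t in (0)..y, r * signedRpow (r - 1) (x + t) = |x + y| ^ r - |x + 0| ^ r :=
    intervalIntegral.integral_eq_sub_of_hasDerivAt
      (fun t _ => (hasDerivAt_abs_rpow_eq_signedRpow hr1 (x + t)).comp_const_add x t)
      hmono.intervalIntegrable
  have hpow : ∫ t in (0)..y, 2 * r * t ^ (r - 1) = 2 * y ^ r := by
    rw [intervalIntegral.integral_const_mul, integral_rpow (Or.inl (by linarith)),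
      sub_add_cancel, Real.zero_rpow (by linarith), sub_zero]
    field_simp
  have hholder : ∫ t in (0)..y, (r * signedRpow (r - 1) (x + t) - r * signedRpow (r - 1) x)
      ≤ ∫ t in (0)..y, 2 * r * t ^ (r - 1) := by
    refine intervalIntegral.integral_mono_on hy
      (hmono.intervalIntegrable.sub intervalIntegrable_const)
      ((intervalIntegral.intervalIntegrable_rpow (Or.inl (by linarith))).const_mul _)
      fun t ht => ?_
    have := signedRpow_sub_le (s := r - 1) (by linarith) (by linarith)
      (le_add_of_nonneg_right ht.1 : x ≤ x + t)
    rw [add_sub_cancel_left] at this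
    nlinarith
  rw [intervalIntegral.integral_sub hmono.intervalIntegrable intervalIntegrable_const, hftc,
    intervalIntegral.integral_const, hpow, smul_eq_mul, add_zero] at hholder
  linarith

lemma abs_add_rpow_le {r : ℝ} (hr1 : 1 ≤ r) (hr2 : r ≤ 2) (x y : ℝ) :
    |x + y| ^ r ≤ |x| ^ r + r * signedRpow (r - 1) x * y + 2 * |y| ^ r := by
  rcases hr1.eq_or_lt with rfl | hr1
  · have hsign := abs_signedRpow_le 0 x
    rw [Real.rpow_zero] at hsign
    have hcross : |signedRpow 0 x * y| ≤ |y| := by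
      rw [abs_mul]; exact mul_le_of_le_one_left (abs_nonneg y) hsign
    simp only [sub_self, Real.rpow_one, one_mul]
    linarith [abs_add_le x y, neg_abs_le (signedRpow 0 x * y)]
  rcases le_or_gt 0 y with hy | hy
  · simpa [abs_of_nonneg hy] using abs_add_rpow_le_of_nonneg hr1 hr2 x hy
  · have := abs_add_rpow_le_of_nonneg hr1 hr2 (-x) (neg_nonneg.2 hy.le)
    rw [← neg_add, abs_neg, abs_neg, signedRpow_neg] at this
    rw [abs_of_neg hy]
    linarith

lemma integrable_abs_sum_rpow {ι Ω : Type*} [MeasurableSpace Ω] {μ : Measure Ω} {r : ℝ}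
    (hr : 0 < r) {X : ι → Ω → ℝ} (hmeas : ∀ i, Measurable (X i))
    (hmom : ∀ i, Integrable (fun ω => |X i ω| ^ r) μ) (s : Finset ι) :
    Integrable (fun ω => |∑ i ∈ s, X i ω| ^ r) μ := by
  have hLp (i : ι) : MemLp (X i) (ENNReal.ofReal r) μ :=
    (integrable_norm_rpow_iff (hmeas i).aestronglyMeasurable (by simpa using hr)
      ENNReal.ofReal_ne_top).1 (by simpa [ENNReal.toReal_ofReal hr.le] using hmom i)
  simpa [ENNReal.toReal_ofReal hr.le] using
    (memLp_finsetSum' s fun i _ => hLp i).integrable_norm_rpow (by simpa using hr)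
      ENNReal.ofReal_ne_top

namespace ProbabilityTheory

lemma IndepFun.integral_abs_add_rpow_le {Ω : Type*} [MeasurableSpace Ω] {μ : Measure Ω}
    [IsProbabilityMeasure μ] {r : ℝ} (hr1 : 1 ≤ r) (hr2 : r ≤ 2) {S Y : Ω → ℝ}
    (hS : Measurable S) (hY : Measurable Y) (hSY : IndepFun S Y μ)
    (hSr : Integrable (fun ω => |S ω| ^ r) μ) (hYr : Integrable (fun ω => |Y ω| ^ r) μ)
    (hYmean : ∫ ω, Y ω ∂μ = 0) :
    ∫ ω, |S ω + Y ω| ^ r ∂μ ≤ ∫ ω, |S ω| ^ r ∂μ + 2 * ∫ ω, |Y ω| ^ r ∂μ := by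
  have hψ : Measurable (signedRpow (r - 1)) := (monotone_signedRpow (by linarith)).measurable
  have hψS : Integrable (fun ω => signedRpow (r - 1) (S ω)) μ :=
    (integrable_norm_rpow_of_le hS.aestronglyMeasurable (by linarith) (by linarith)
      (by linarith) hSr).mono' (hψ.comp hS).aestronglyMeasurable
      (ae_of_all _ fun ω => abs_signedRpow_le _ _)
  have hY1 : Integrable Y μ := (integrable_norm_iff hY.aestronglyMeasurable).1 <| by
    simpa using integrable_norm_rpow_of_le hY.aestronglyMeasurable zero_le_one (by linarith)
      hr1 hYr
  have hindep : IndepFun (fun ω => signedRpow (r - 1) (S ω)) Y μ := hSY.comp hψ measurable_id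
  have hcross : Integrable (fun ω => r * (signedRpow (r - 1) (S ω) * Y ω)) μ :=
    (hindep.integrable_mul hψS hY1).const_mul r
  have hSr_cross : Integrable (fun ω => |S ω| ^ r + r * (signedRpow (r - 1) (S ω) * Y ω)) μ :=
    hSr.add hcross
  have hcross_zero : ∫ ω, signedRpow (r - 1) (S ω) * Y ω ∂μ = 0 := by
    rw [hindep.integral_fun_mul_eq_mul_integral hψS.1 hY1.1, hYmean, mul_zero]
  calc ∫ ω, |S ω + Y ω| ^ r ∂μ
      ≤ ∫ ω, |S ω| ^ r + r * (signedRpow (r - 1) (S ω) * Y ω) + 2 * |Y ω| ^ r ∂μ :=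
        integral_mono_of_nonneg (ae_of_all _ fun ω => by positivity)
          (hSr_cross.add (hYr.const_mul 2))
          (ae_of_all _ fun ω => (abs_add_rpow_le hr1 hr2 (S ω) (Y ω)).trans_eq (by ring))
    _ = ∫ ω, |S ω| ^ r ∂μ + 2 * ∫ ω, |Y ω| ^ r ∂μ := by
        rw [integral_add hSr_cross (hYr.const_mul 2), integral_add hSr hcross,
          integral_const_mul, integral_const_mul, hcross_zero, mul_zero, add_zero]

theorem iIndepFun.integral_abs_sum_rpow_le {ι Ω : Type*} [MeasurableSpace Ω] {μ : Measure Ω}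
    [IsProbabilityMeasure μ] {r : ℝ} (hr1 : 1 ≤ r) (hr2 : r ≤ 2) {X : ι → Ω → ℝ}
    (hmeas : ∀ i, Measurable (X i)) (hindep : iIndepFun X μ)
    (hmean : ∀ i, ∫ ω, X i ω ∂μ = 0) (hmom : ∀ i, Integrable (fun ω => |X i ω| ^ r) μ)
    (s : Finset ι) :
    ∫ ω, |∑ i ∈ s, X i ω| ^ r ∂μ ≤ 2 * ∑ i ∈ s, ∫ ω, |X i ω| ^ r ∂μ := by
  classical
  induction s using Finset.induction_on with
  | empty => simp [Real.zero_rpow (by linarith : r ≠ 0)]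
  | insert a s ha ih =>
    have hindep_sum : IndepFun (fun ω => ∑ i ∈ s, X i ω) (X a) μ := by
      simpa [Finset.sum_fn] using hindep.indepFun_finsetSum_of_notMem hmeas ha
    have hstep := hindep_sum.integral_abs_add_rpow_le hr1 hr2
      (Finset.measurable_fun_sum s fun i _ => hmeas i) (hmeas a)
      (integrable_abs_sum_rpow (by linarith) hmeas hmom s) (hmom a) (hmean a)
    simp only [Finset.sum_insert ha, add_comm (X a _)]
    linarith

end ProbabilityTheory

theorem stmt_13 {Ω : Type*} [MeasurableSpace Ω] (μ : Measure Ω) [IsProbabilityMeasure μ]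
    (r : ℝ) (hr1 : 1 ≤ r) (hr2 : r ≤ 2) (n : ℕ) (X : Fin n → Ω → ℝ)
    (hmeas : ∀ i, Measurable (X i))
    (hindep : iIndepFun (m := fun _ => Real.measurableSpace) X μ)
    (hmean : ∀ i, ∫ ω, X i ω ∂μ = 0)
    (hmom : ∀ i, Integrable (fun ω => |X i ω| ^ r) μ) :
    ∫ ω, |∑ i, X i ω| ^ r ∂μ ≤ 2 * ∑ i, ∫ ω, |X i ω| ^ r ∂μ :=
  hindep.integral_abs_sum_rpow_le hr1 hr2 hmeas hmean hmom Finset.univ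
end

section
/- Let 1 ≤ p ≤ 2 and let A ∈ ℝ^{n×d} have full column rank (rank d). For i ∈ [n], let a_i ∈ ℝ^d denote the i-th row of A and define the leverage score τ_i(A) = a_iᵀ (AᵀA)⁻¹ a_i. Then for every i ∈ [n] and every x ∈ ℝ^d, |⟨a_i, x⟩|^p ≤ (τ_i(A))^{p/2} · ‖Ax‖_p^p. Equivalently, the ℓ_p-sensitivity ℓ_i^{(p)}(A) = sup_{x : Ax ≠ 0} |⟨a_i, x⟩|^p / ‖Ax‖_p^p satisfies ℓ_i^{(p)}(A) ≤ (τ_i(A))^{p/2}. -/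
/-!
With `c = (AᵀA)⁻¹ aᵢ` one has `⟨aᵢ, x⟩ = ⟨Ac, Ax⟩` for every `x`, and in particular
`‖Ac‖₂² = ⟨aᵢ, c⟩ = τᵢ(A)`. Cauchy–Schwarz therefore gives `⟨aᵢ, x⟩² ≤ τᵢ(A) ‖Ax‖₂²`; raising
this to the power `p / 2` and using `‖y‖₂ ≤ ‖y‖_p` for `p ≤ 2` (subadditivity of `t ↦ t ^ (p / 2)`)
yields the claim.
-/

open Matrix Finset

lemma Real.rpow_sum_le_sum_rpow {ι : Type*} (s : Finset ι) {f : ι → ℝ} (hf : ∀ i ∈ s, 0 ≤ f i)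
    {q : ℝ} (hq0 : 0 < q) (hq1 : q ≤ 1) : (∑ i ∈ s, f i) ^ q ≤ ∑ i ∈ s, f i ^ q := by
  induction s using Finset.cons_induction with
  | empty => simp [Real.zero_rpow hq0.ne']
  | cons a s ha ih =>
    rw [forall_mem_cons] at hf
    rw [sum_cons, sum_cons]
    calc (f a + ∑ i ∈ s, f i) ^ q ≤ f a ^ q + (∑ i ∈ s, f i) ^ q :=
          Real.rpow_add_le_add_rpow hf.1 (sum_nonneg hf.2) hq0.le hq1
      _ ≤ f a ^ q + ∑ i ∈ s, f i ^ q := by gcongr; exact ih hf.2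

lemma Real.sq_rpow_div_two (a p : ℝ) : (a ^ 2) ^ (p / 2) = |a| ^ p := by
  rw [← sq_abs, ← Real.rpow_natCast, ← Real.rpow_mul (abs_nonneg a)]
  norm_num [mul_div_cancel₀]

lemma rpow_div_two_sum_sq_le_sum_abs_rpow {ι : Type*} (s : Finset ι) (y : ι → ℝ) {p : ℝ}
    (hp0 : 0 < p) (hp2 : p ≤ 2) : (∑ j ∈ s, y j ^ 2) ^ (p / 2) ≤ ∑ j ∈ s, |y j| ^ p := by
  simpa only [Real.sq_rpow_div_two] using
    Real.rpow_sum_le_sum_rpow (q := p / 2) s (fun j _ => sq_nonneg (y j)) (by positivity)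
      (by linarith)

namespace Matrix

lemma isUnit_of_rank_eq_card {n K : Type*} [Fintype n] [DecidableEq n] [Field K]
    {M : Matrix n n K} (h : M.rank = Fintype.card n) : IsUnit M := by
  have : LinearMap.range M.mulVecLin = ⊤ :=
    Submodule.eq_top_of_finrank_eq (by rw [Module.finrank_fintype_fun_eq_card]; exact h)
  exact mulVec_surjective_iff_isUnit.mp (LinearMap.range_eq_top.mp this)

variable {m n R : Type*} [Fintype m] [Fintype n] [DecidableEq n]

section CommRing

variable [CommRing R]

lemma mulVec_inv_transpose_mul_self_dotProduct {A : Matrix m n R}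
    (hA : IsUnit (Aᵀ * A).det) (a v : n → R) :
    (A *ᵥ ((Aᵀ * A)⁻¹ *ᵥ a)) ⬝ᵥ (A *ᵥ v) = a ⬝ᵥ v := by
  rw [dotProduct_mulVec, ← mulVec_transpose, mulVec_mulVec, mulVec_mulVec,
    mul_nonsing_inv _ hA, one_mulVec]

lemma dotProduct_inv_transpose_mul_self_mulVec {A : Matrix m n R}
    (hA : IsUnit (Aᵀ * A).det) (a : n → R) :
    a ⬝ᵥ ((Aᵀ * A)⁻¹ *ᵥ a) = ∑ j, (A *ᵥ ((Aᵀ * A)⁻¹ *ᵥ a)) j ^ 2 := by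
  rw [← mulVec_inv_transpose_mul_self_dotProduct hA a]
  simp only [dotProduct, sq]

end CommRing

variable [Field R] [LinearOrder R] [IsStrictOrderedRing R]

lemma sq_dotProduct_le_mul_sum_sq_mulVec {A : Matrix m n R}
    (hA : IsUnit (Aᵀ * A).det) (a v : n → R) :
    (a ⬝ᵥ v) ^ 2 ≤ (a ⬝ᵥ ((Aᵀ * A)⁻¹ *ᵥ a)) * ∑ j, (A *ᵥ v) j ^ 2 := by
  rw [← mulVec_inv_transpose_mul_self_dotProduct hA a v,
    dotProduct_inv_transpose_mul_self_mulVec hA]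
  exact sum_mul_sq_le_sq_mul_sq _ _ _

end Matrix

theorem stmt_14 (p : ℝ) (hp1 : 1 ≤ p) (hp2 : p ≤ 2) (n d : ℕ)
    (A : Matrix (Fin n) (Fin d) ℝ) (hrank : A.rank = d) :
    ∀ (i : Fin n) (x : Fin d → ℝ),
      |A i ⬝ᵥ x| ^ p ≤ (A i ⬝ᵥ ((Aᵀ * A)⁻¹ *ᵥ A i)) ^ (p / 2) * ∑ j, |(A *ᵥ x) j| ^ p := by
  intro i x
  have hA : IsUnit (Aᵀ * A).det := (isUnit_iff_isUnit_det _).mp <|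
    isUnit_of_rank_eq_card (by rw [rank_transpose_mul_self, hrank, Fintype.card_fin])
  have hτ : 0 ≤ A i ⬝ᵥ ((Aᵀ * A)⁻¹ *ᵥ A i) := by
    rw [dotProduct_inv_transpose_mul_self_mulVec hA]; positivity
  calc |A i ⬝ᵥ x| ^ p = ((A i ⬝ᵥ x) ^ 2) ^ (p / 2) := (Real.sq_rpow_div_two _ _).symm
    _ ≤ ((A i ⬝ᵥ ((Aᵀ * A)⁻¹ *ᵥ A i)) * ∑ j, (A *ᵥ x) j ^ 2) ^ (p / 2) := by
      gcongr; exact sq_dotProduct_le_mul_sum_sq_mulVec hA _ _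
    _ = (A i ⬝ᵥ ((Aᵀ * A)⁻¹ *ᵥ A i)) ^ (p / 2) * (∑ j, (A *ᵥ x) j ^ 2) ^ (p / 2) :=
      Real.mul_rpow hτ (by positivity)
    _ ≤ _ := by
      gcongr; exact rpow_div_two_sum_sq_le_sum_abs_rpow _ _ (by linarith) hp2
end

section
/- Let B ∈ ℝ^{m×d}, let ε₀ ∈ (0, 1/2], and suppose that (1 − ε₀)·‖x‖₂ ≤ ‖Bx‖₂ ≤ (1 + ε₀)·‖x‖₂ for every x ∈ ℝ^d. Let b ∈ ℝ^m and let x* ∈ ℝ^d satisfy Bᵀ(Bx* − b) = 0. Then for every x ∈ ℝ^d, the gradient-descent update x' = x − Bᵀ(Bx − b) satisfies ‖B(x' − x*)‖₂ ≤ 8ε₀·‖B(x − x*)‖₂. -/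
/-!
With `e = x - x*`, the normal equations turn the gradient step into `e ↦ (1 - BᵀB) e`.
The symmetric operator `1 - BᵀB` has quadratic form `‖e‖² - ‖Be‖²`, which the near-isometry
bounds by `(2ε₀ + ε₀²)‖e‖²`; since the norm of a symmetric operator is the supremum of its
Rayleigh quotient, `‖(1 - BᵀB) e‖ ≤ (2ε₀ + ε₀²)‖e‖`. Applying `B` costs a factor `1 + ε₀`, and
`‖e‖ ≤ ‖Be‖ / (1 - ε₀) ≤ 2‖Be‖`, so the constant is `2ε₀(1 + ε₀)(2 + ε₀) ≤ 8ε₀`.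
-/

open Matrix Finset

/-- Euclidean norm of a vector in `Fin k → ℝ`. -/
noncomputable def euclNorm {k : ℕ} (v : Fin k → ℝ) : ℝ :=
  Real.sqrt (∑ i, v i ^ 2)

lemma abs_sq_sub_sq_le_of_abs_sub_le {a b ε : ℝ} (ha : 0 ≤ a) (hε : 0 ≤ ε)
    (h : |b - a| ≤ ε * a) : |a ^ 2 - b ^ 2| ≤ (2 * ε + ε ^ 2) * a ^ 2 := by
  have hab : |a + b| ≤ (2 + ε) * a := by
    rw [abs_le]; constructor <;> nlinarith [abs_le.mp h]
  calc |a ^ 2 - b ^ 2| = |b - a| * |a + b| := by rw [← abs_mul, ← abs_neg]; ring_nf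
    _ ≤ (ε * a) * ((2 + ε) * a) := mul_le_mul h hab (abs_nonneg _) (by positivity)
    _ = (2 * ε + ε ^ 2) * a ^ 2 := by ring

namespace ContinuousLinearMap

variable {E F : Type*} [NormedAddCommGroup E] [InnerProductSpace ℝ E] [CompleteSpace E]
  [NormedAddCommGroup F] [InnerProductSpace ℝ F] [CompleteSpace F]
  {B : E →L[ℝ] F} {ε : ℝ}

theorem norm_one_sub_adjoint_comp_self_le (hε : 0 ≤ ε)
    (hB : ∀ x, |‖B x‖ - ‖x‖| ≤ ε * ‖x‖) :
    ‖1 - adjoint B ∘L B‖ ≤ 2 * ε + ε ^ 2 := by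
  have hsymm : (1 - adjoint B ∘L B).IsSymmetric := fun x y => by
    simp [inner_sub_left, inner_sub_right, adjoint_inner_left, adjoint_inner_right]
  rw [norm_eq_iSup_rayleighQuotient _ hsymm]
  refine ciSup_le fun x => ?_
  have hquad : reApplyInnerSelf (1 - adjoint B ∘L B) x = ‖x‖ ^ 2 - ‖B x‖ ^ 2 := by
    simp [reApplyInnerSelf_apply, inner_sub_left, adjoint_inner_left]
  rw [rayleighQuotient, hquad, abs_div, abs_sq]
  exact div_le_of_le_mul₀ (by positivity) (by positivity)
    (abs_sq_sub_sq_le_of_abs_sub_le (norm_nonneg x) hε (hB x))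

theorem norm_apply_sub_adjoint_apply_apply_le (hε : 0 ≤ ε) (hε' : ε ≤ 1 / 2)
    (hB : ∀ x, |‖B x‖ - ‖x‖| ≤ ε * ‖x‖) (e : E) :
    ‖B (e - adjoint B (B e))‖ ≤ 8 * ε * ‖B e‖ := by
  have hstep : ‖e - adjoint B (B e)‖ ≤ (2 * ε + ε ^ 2) * ‖e‖ := by
    simpa using le_of_opNorm_le _ (norm_one_sub_adjoint_comp_self_le hε hB) e
  have he : ‖e‖ ≤ 2 * ‖B e‖ := by nlinarith [abs_le.mp (hB e), norm_nonneg e]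
  have hconst : (1 + ε) * (2 + ε) * 2 ≤ 8 := by nlinarith
  calc ‖B (e - adjoint B (B e))‖ ≤ (1 + ε) * ‖e - adjoint B (B e)‖ := by
        linarith [abs_le.mp (hB (e - adjoint B (B e)))]
    _ ≤ (1 + ε) * ((2 * ε + ε ^ 2) * (2 * ‖B e‖)) := by gcongr; exact hstep.trans (by gcongr)
    _ = (1 + ε) * (2 + ε) * 2 * (ε * ‖B e‖) := by ring
    _ ≤ 8 * (ε * ‖B e‖) := by gcongr
    _ = 8 * ε * ‖B e‖ := by ring

end ContinuousLinearMap

lemma euclNorm_eq_norm_toLp {k : ℕ} (v : Fin k → ℝ) : euclNorm v = ‖WithLp.toLp 2 v‖ := by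
  simp [euclNorm, EuclideanSpace.norm_eq]

lemma Matrix.adjoint_toEuclideanLin_toLp {m n : Type*} [Fintype m] [Fintype n] [DecidableEq m]
    [DecidableEq n] (A : Matrix m n ℝ) (w : m → ℝ) :
    ContinuousLinearMap.adjoint (LinearMap.toContinuousLinearMap A.toEuclideanLin)
      (WithLp.toLp 2 w) = WithLp.toLp 2 (Aᵀ *ᵥ w) := by
  rw [← LinearMap.adjoint_toContinuousLinearMap, ← toEuclideanLin_conjTranspose_eq_adjoint,
    conjTranspose_eq_transpose_of_trivial]
  rfl

theorem stmt_15 (m d : ℕ) (B : Matrix (Fin m) (Fin d) ℝ) (ε₀ : ℝ)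
    (hε₀ : 0 < ε₀) (hε₀' : ε₀ ≤ 1 / 2)
    (hB : ∀ x : Fin d → ℝ,
      (1 - ε₀) * euclNorm x ≤ euclNorm (B *ᵥ x) ∧
      euclNorm (B *ᵥ x) ≤ (1 + ε₀) * euclNorm x)
    (b : Fin m → ℝ) (xstar : Fin d → ℝ)
    (hstar : Bᵀ *ᵥ (B *ᵥ xstar - b) = 0) :
    ∀ x : Fin d → ℝ,
      euclNorm (B *ᵥ ((x - Bᵀ *ᵥ (B *ᵥ x - b)) - xstar)) ≤
        8 * ε₀ * euclNorm (B *ᵥ (x - xstar)) := by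
  intro x
  set L := LinearMap.toContinuousLinearMap (Matrix.toEuclideanLin B)
  have hL (v : Fin d → ℝ) : L (WithLp.toLp 2 v) = WithLp.toLp 2 (B *ᵥ v) := rfl
  have hnear (y : EuclideanSpace ℝ (Fin d)) : |‖L y‖ - ‖y‖| ≤ ε₀ * ‖y‖ := by
    rw [← WithLp.toLp_ofLp _ y, hL, ← euclNorm_eq_norm_toLp, ← euclNorm_eq_norm_toLp]
    exact abs_sub_le_iff.mpr ⟨by linarith [hB y.ofLp], by linarith [hB y.ofLp]⟩
  have hresidual : Bᵀ *ᵥ (B *ᵥ x - b) = Bᵀ *ᵥ (B *ᵥ (x - xstar)) := by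
    rw [← sub_eq_zero, ← mulVec_sub, mulVec_sub B x xstar, ← hstar]
    congr 1; abel
  have hcontract := L.norm_apply_sub_adjoint_apply_apply_le hε₀.le hε₀' hnear (WithLp.toLp 2 (x - xstar))
  rw [hL, Matrix.adjoint_toEuclideanLin_toLp] at hcontract
  rw [euclNorm_eq_norm_toLp, euclNorm_eq_norm_toLp, sub_right_comm, hresidual]
  exact hcontract
end
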